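/- Main coherence theorem: Let ψ¹_1,…,ψ¹_N and ψ²_1,…,ψ²_N be two linearly independent families of unit vectors in a finite-dimensional complex Hilbert space H with ⟨ψ²_{j'}, ψ²_j⟩ ≠ 0 for all j, j'. Suppose there are operators A_k on H with ∑_k A_k† A_k = 1 and A_k ψ¹_j = c_{jk} ψ²_j for scalars c_{jk}. Suppose further there exist coefficients q_j, all nonzero, and r_j, such that ∑_k A_k |φ¹⟩⟨φ¹| A_k† = |φ²⟩⟨φ²| where φ¹ = ∑_j q_j ψ¹_j and φ² = ∑_j r_j ψ²_j are unit vectors. Then there exists a unitary U on H such that |ψ²_j⟩⟨ψ²_j| = U |ψ¹_j⟩⟨ψ¹_j| U† for all j. -/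

import Mathlib

/-!
Purity of the output forces every `A k φ¹` onto the line through `φ²`: a sum of rank-one
projections `∑ |vₖ⟩⟨vₖ|` equal to `|χ⟩⟨χ|` annihilates `χᗮ` in the quadratic form, hence so does
each summand. Comparing coefficients in the independent family `ψ²` then gives
`c j k = d j * μ k`, and the Kraus relation `∑ Aₖ† Aₖ = 1` turns this into
`⟪ψ¹ i, ψ¹ j⟫ = conj (d i) * d j * ‖μ‖² * ⟪ψ² i, ψ² j⟫`. So `ψ¹` has the same Gram matrix as the
rescaled family `‖μ‖ d j • ψ² j`, and a linearly independent family can be moved onto any family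
with the same Gram matrix by a unitary. The scalars `‖μ‖ d j` have modulus one since both families
are normalized, so they disappear from the projections.
-/

open scoped InnerProductSpace ComplexOrder

/-- The rank-one operator `|φ⟩⟨χ| : v ↦ ⟨χ, v⟩ φ`. -/
noncomputable def outer {H : Type*} [NormedAddCommGroup H] [InnerProductSpace ℂ H]
    (φ χ : H) : H →ₗ[ℂ] H where
  toFun v := ⟪χ, v⟫_ℂ • φ
  map_add' x y := by simp [inner_add_right, add_smul]
  map_smul' c x := by simp [inner_smul_right, smul_smul]

section Outer

variable {H : Type*} [NormedAddCommGroup H] [InnerProductSpace ℂ H]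

@[simp]
theorem outer_apply (φ χ v : H) : outer φ χ v = ⟪χ, v⟫_ℂ • φ := rfl

theorem outer_smul_smul (a b : ℂ) (φ χ : H) :
    outer (a • φ) (b • χ) = (a * starRingEnd ℂ b) • outer φ χ := by
  ext v
  simp [smul_smul, mul_comm, mul_left_comm]

theorem comp_outer_comp_adjoint [FiniteDimensional ℂ H] (A B : H →ₗ[ℂ] H) (φ χ : H) :
    A ∘ₗ outer φ χ ∘ₗ LinearMap.adjoint B = outer (A φ) (B χ) := by
  ext v
  simp [LinearMap.adjoint_inner_right]

theorem inner_outer_self_apply (φ v : H) : ⟪v, outer φ φ v⟫_ℂ = ((‖⟪φ, v⟫_ℂ‖ ^ 2 : ℝ) : ℂ) := by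
  rw [outer_apply, inner_smul_right, ← inner_conj_symm v φ, Complex.ofReal_pow, Complex.mul_conj']

theorem exists_eq_smul_of_sum_outer_eq_outer {ι : Type*} [Fintype ι] {φ : ι → H} {χ : H}
    (h : ∑ k, outer (φ k) (φ k) = outer χ χ) (k : ι) : ∃ a : ℂ, φ k = a • χ := by
  have hperp : ∀ v, ⟪χ, v⟫_ℂ = 0 → ⟪v, φ k⟫_ℂ = 0 := by
    intro v hv
    have hsum : ∑ l, ‖⟪φ l, v⟫_ℂ‖ ^ 2 = 0 := by
      have := congr(⟪v, $h v⟫_ℂ)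
      simp only [LinearMap.sum_apply, inner_sum, inner_outer_self_apply,
        hv, norm_zero, zero_pow two_ne_zero] at this
      exact_mod_cast this
    rw [Fintype.sum_eq_zero_iff_of_nonneg fun _ => by positivity] at hsum
    simpa [inner_eq_zero_symm] using congr_fun hsum k
  have hmem : φ k ∈ (ℂ ∙ χ)ᗮᗮ := fun v hv =>
    hperp v (Submodule.mem_orthogonal_singleton_iff_inner_right.1 hv)
  rw [Submodule.orthogonal_orthogonal, Submodule.mem_span_singleton] at hmem
  obtain ⟨a, ha⟩ := hmem
  exact ⟨a, ha.symm⟩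

end Outer

theorem inner_eq_sum_inner_of_sum_adjoint_comp_eq_id {𝕜 E F κ : Type*} [RCLike 𝕜]
    [NormedAddCommGroup E] [InnerProductSpace 𝕜 E] [FiniteDimensional 𝕜 E]
    [NormedAddCommGroup F] [InnerProductSpace 𝕜 F] [FiniteDimensional 𝕜 F] [Fintype κ]
    {A : κ → E →ₗ[𝕜] F} (hA : ∑ k, LinearMap.adjoint (A k) ∘ₗ A k = LinearMap.id) (x y : E) :
    ⟪x, y⟫_𝕜 = ∑ k, ⟪A k x, A k y⟫_𝕜 := by
  conv_lhs => rw [← LinearMap.id_apply (R := 𝕜) y, ← hA]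
  simp [inner_sum, LinearMap.adjoint_inner_right]

theorem LinearIndependent.mul_eq_mul_of_map_sum_eq_smul_sum {𝕜 E F ι : Type*} [Field 𝕜]
    [AddCommGroup E] [Module 𝕜 E] [AddCommGroup F] [Module 𝕜 F] [Fintype ι]
    {v : ι → E} {w : ι → F} (hw : LinearIndependent 𝕜 w) {A : E →ₗ[𝕜] F} {c q r : ι → 𝕜}
    {μ : 𝕜} (hc : ∀ i, A (v i) = c i • w i)
    (h : A (∑ i, q i • v i) = μ • ∑ i, r i • w i) (i : ι) : q i * c i = μ * r i := by
  refine Fintype.linearIndependent_iffₛ.1 hw (fun i => q i * c i) (fun i => μ * r i) ?_ i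
  simpa [map_sum, hc, smul_smul, Finset.smul_sum] using h

theorem exists_inner_eq_inner_smul_smul {𝕜 E F ι κ : Type*} [RCLike 𝕜]
    [NormedAddCommGroup E] [InnerProductSpace 𝕜 E] [NormedAddCommGroup F]
    [InnerProductSpace 𝕜 F] [Fintype κ] {A : κ → E →ₗ[𝕜] F}
    (hA : ∀ x y, ⟪x, y⟫_𝕜 = ∑ k, ⟪A k x, A k y⟫_𝕜) {v : ι → E} {w : ι → F} (d : ι → 𝕜)
    (μ : κ → 𝕜) (h : ∀ i k, A k (v i) = (d i * μ k) • w i) :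
    ∃ a : ι → 𝕜, ∀ i j, ⟪v i, v j⟫_𝕜 = ⟪a i • w i, a j • w j⟫_𝕜 := by
  set s : ℝ := √(∑ k, ‖μ k‖ ^ 2)
  have hs : (s : 𝕜) ^ 2 = ∑ k, starRingEnd 𝕜 (μ k) * μ k := by
    rw [← RCLike.ofReal_pow, Real.sq_sqrt (by positivity), RCLike.ofReal_sum]
    simp [RCLike.conj_mul]
  refine ⟨fun i => s * d i, fun i j => ?_⟩
  simp only [hA, h, inner_smul_left, inner_smul_right, map_mul, RCLike.conj_ofReal]
  calc ∑ k, d j * μ k * (starRingEnd 𝕜 (d i) * starRingEnd 𝕜 (μ k) * ⟪w i, w j⟫_𝕜)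
      = starRingEnd 𝕜 (d i) * d j * ⟪w i, w j⟫_𝕜 * ∑ k, starRingEnd 𝕜 (μ k) * μ k := by
        rw [Finset.mul_sum]
        exact Finset.sum_congr rfl fun k _ => by ring
    _ = s * d j * (s * starRingEnd 𝕜 (d i) * ⟪w i, w j⟫_𝕜) := by rw [← hs]; ring

theorem LinearIndependent.exists_linearIsometryEquiv_apply_eq {𝕜 E ι : Type*} [RCLike 𝕜]
    [NormedAddCommGroup E] [InnerProductSpace 𝕜 E] [FiniteDimensional 𝕜 E] {v w : ι → E}
    (hv : LinearIndependent 𝕜 v) (h : ∀ i j, ⟪v i, v j⟫_𝕜 = ⟪w i, w j⟫_𝕜) :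
    ∃ U : E ≃ₗᵢ[𝕜] E, ∀ i, U (v i) = w i := by
  let b := Module.Basis.span hv
  let T := b.constr 𝕜 w
  have hb : ∀ i, (b i : E) = v i := fun i => by simp [b, Module.Basis.span_apply]
  have hT : ∀ i, T (b i) = w i := b.constr_basis 𝕜 w
  have hinner : ∀ x y, ⟪T x, T y⟫_𝕜 = ⟪x, y⟫_𝕜 := by
    have : ((innerₛₗ 𝕜).comp T).compl₂ T = innerₛₗ 𝕜 :=
      LinearMap.ext_basis b b fun i j => by simp [hT, hb, h]
    exact fun x y => congr($this x y)
  let U := (T.isometryOfInner hinner).extend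
  refine ⟨U.toLinearIsometryEquiv rfl, fun i => ?_⟩
  rw [← hb]
  simp [U, LinearIsometry.extend_apply, hT]

theorem stmt_15_general {H : Type*} [NormedAddCommGroup H] [InnerProductSpace ℂ H]
    [FiniteDimensional ℂ H] {N m : ℕ} (ψ1 ψ2 : Fin N → H)
    (hli1 : LinearIndependent ℂ ψ1) (hli2 : LinearIndependent ℂ ψ2)
    (h1 : ∀ j, ‖ψ1 j‖ = 1) (h2 : ∀ j, ‖ψ2 j‖ = 1)
    (A : Fin m → (H →ₗ[ℂ] H))
    (hA : ∑ k, LinearMap.adjoint (A k) ∘ₗ A k = LinearMap.id)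
    (c : Fin N → Fin m → ℂ) (hc : ∀ j k, A k (ψ1 j) = c j k • ψ2 j)
    (q r : Fin N → ℂ) (hq : ∀ j, q j ≠ 0)
    (hpure : ∑ k, (A k) ∘ₗ outer (∑ j, q j • ψ1 j) (∑ j, q j • ψ1 j)
          ∘ₗ LinearMap.adjoint (A k)
        = outer (∑ j, r j • ψ2 j) (∑ j, r j • ψ2 j)) :
    ∃ U : H →ₗ[ℂ] H,
      (LinearMap.adjoint U ∘ₗ U = LinearMap.id) ∧
      (U ∘ₗ LinearMap.adjoint U = LinearMap.id) ∧
      (∀ j, outer (ψ2 j) (ψ2 j)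
          = U ∘ₗ outer (ψ1 j) (ψ1 j) ∘ₗ LinearMap.adjoint U) := by
  simp_rw [comp_outer_comp_adjoint] at hpure
  choose μ hμ using exists_eq_smul_of_sum_outer_eq_outer hpure
  have hcμ : ∀ j k, A k (ψ1 j) = (r j / q j * μ k) • ψ2 j := fun j k => by
    have := hli2.mul_eq_mul_of_map_sum_eq_smul_sum (hc · k) (hμ k) j
    have hcjk : c j k = r j * μ k / q j :=
      eq_div_of_mul_eq (hq j) (by rw [mul_comm, this, mul_comm])
    rw [hc, hcjk, div_mul_eq_mul_div]
  obtain ⟨a, ha⟩ := exists_inner_eq_inner_smul_smul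
    (inner_eq_sum_inner_of_sum_adjoint_comp_eq_id hA) _ μ hcμ
  obtain ⟨U, hU⟩ := hli1.exists_linearIsometryEquiv_apply_eq ha
  have hnorm : ∀ j, ‖a j‖ = 1 := fun j => by
    simpa [h1, h2, norm_smul] using congr(‖$(hU j)‖).symm
  have hadj : LinearMap.adjoint U.toLinearMap = U.symm.toLinearMap :=
    U.adjoint_toLinearMap_eq_symm
  refine ⟨U.toLinearMap, by ext; simp [hadj], by ext; simp [hadj], fun j => ?_⟩
  rw [comp_outer_comp_adjoint]
  simp [hU, outer_smul_smul, Complex.mul_conj', hnorm]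

theorem stmt_15 {H : Type*} [NormedAddCommGroup H] [InnerProductSpace ℂ H]
    [FiniteDimensional ℂ H] {N m : ℕ} (ψ1 ψ2 : Fin N → H)
    (hli1 : LinearIndependent ℂ ψ1) (hli2 : LinearIndependent ℂ ψ2)
    (h1 : ∀ j, ‖ψ1 j‖ = 1) (h2 : ∀ j, ‖ψ2 j‖ = 1)
    (hnz : ∀ j j', ⟪ψ2 j', ψ2 j⟫_ℂ ≠ 0)
    (A : Fin m → (H →ₗ[ℂ] H))
    (hA : ∑ k, LinearMap.adjoint (A k) ∘ₗ A k = LinearMap.id)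
    (c : Fin N → Fin m → ℂ) (hc : ∀ j k, A k (ψ1 j) = c j k • ψ2 j)
    (q r : Fin N → ℂ) (hq : ∀ j, q j ≠ 0)
    (hφ1 : ‖∑ j, q j • ψ1 j‖ = 1) (hφ2 : ‖∑ j, r j • ψ2 j‖ = 1)
    (hpure : ∑ k, (A k) ∘ₗ outer (∑ j, q j • ψ1 j) (∑ j, q j • ψ1 j)
          ∘ₗ LinearMap.adjoint (A k)
        = outer (∑ j, r j • ψ2 j) (∑ j, r j • ψ2 j)) :
    ∃ U : H →ₗ[ℂ] H,
      (LinearMap.adjoint U ∘ₗ U = LinearMap.id) ∧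
      (U ∘ₗ LinearMap.adjoint U = LinearMap.id) ∧
      (∀ j, outer (ψ2 j) (ψ2 j)
          = U ∘ₗ outer (ψ1 j) (ψ1 j) ∘ₗ LinearMap.adjoint U) :=
  stmt_15_general ψ1 ψ2 hli1 hli2 h1 h2 A hA c hc q r hq hpure
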